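/- Let F ⊂ T_N and suppose that for every x ∈ F the quantity r_x + 2 is at most 3·l_N, where r_x ≥ 0. Define for any subset S ⊆ F the modified total distance Mdist(S) = Σ_{x ∈ R(S)} (r_x + 2) + 3·l_N·(|S| - |R(S)|), where R(S) is the set of representatives of connected components of the auxiliary graph G(S). Then Mdist is monotone: for S ⊆ S' ⊆ F, Mdist(S) ≤ Mdist(S'). -/

import Mathlib

attribute [local instance] Classical.propDecidable

/-- Distance on the cycle `ℤ/Nℤ`. -/
def tdist (N : ℕ) (a b : ZMod N) : ℕ := min (a - b).val (b - a).val

/-- `ℓ^∞`-distance on the torus `(ℤ/Nℤ)^d`. -/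
def dinf (d N : ℕ) (x y : Fin d → ZMod N) : ℕ :=
  Finset.univ.sup fun i => tdist N (x i) (y i)

lemma dinf_comm (d N : ℕ) (x y : Fin d → ZMod N) : dinf d N x y = dinf d N y x :=
  Finset.sup_congr rfl fun i _ => min_comm _ _

/-- The auxiliary graph on a subset `S` of the torus: edges between distinct
points of `S` at `ℓ^∞`-distance at most `3·l_N`. -/
def auxG (d N lN : ℕ) (S : Finset (Fin d → ZMod N)) :
    SimpleGraph (Fin d → ZMod N) where
  Adj a b := a ≠ b ∧ a ∈ S ∧ b ∈ S ∧ dinf d N a b ≤ 3 * lN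
  symm := by
    constructor
    intro a b h
    exact ⟨h.1.symm, h.2.2.1, h.2.1, by rw [dinf_comm]; exact h.2.2.2⟩
  loopless := ⟨fun a h => h.1 rfl⟩

/-- The set of representatives: the minimal-label vertex of each connected
component of the auxiliary graph `G(S)`. -/
noncomputable def reps (d N lN : ℕ) (label : (Fin d → ZMod N) → ℕ)
    (S : Finset (Fin d → ZMod N)) : Finset (Fin d → ZMod N) :=
  S.filter fun x => ∀ y ∈ S, (auxG d N lN S).Reachable x y → label x ≤ label y

/-- The modified total distance
`Mdist(S) = Σ_{x ∈ R(S)} (r_x + 2) + 3·l_N·(|S| - |R(S)|)`. -/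
noncomputable def Mdist (d N lN : ℕ) (label : (Fin d → ZMod N) → ℕ)
    (r : (Fin d → ZMod N) → ℝ) (S : Finset (Fin d → ZMod N)) : ℝ :=
  (∑ x ∈ reps d N lN label S, (r x + 2)) +
    3 * lN * ((S.card : ℝ) - ((reps d N lN label S).card : ℝ))

/-!
Write `Mdist(S)` as a sum over the points of `S`: a representative pays `r_x + 2`, any other point
pays `3·l_N`. A representative of `G(S')` lying in `S` is still a representative of `G(S)`, since
`G(S) ≤ G(S')` has fewer paths; so passing from `S` to `S'` only turns some points of `S` from
representatives into non-representatives, which costs more because `r_x + 2 ≤ 3·l_N`, and adds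
the points of `S' \ S`, whose cost is nonnegative.
-/

open Finset

lemma sum_add_mul_card_sdiff_eq_sum_ite {α R : Type*} [CommRing R] [DecidableEq α]
    {A S : Finset α} (hAS : A ⊆ S) (f : α → R) (c : R) :
    (∑ x ∈ A, f x) + c * ((#S : R) - #A) = ∑ x ∈ S, if x ∈ A then f x else c := by
  rw [sum_ite, filter_mem_eq_inter, inter_eq_right.mpr hAS, sum_const, filter_not,
    filter_mem_eq_inter, inter_eq_right.mpr hAS, card_sdiff_of_subset hAS,
    nsmul_eq_mul, Nat.cast_sub (card_le_card hAS)]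
  ring

section

variable (d N lN : ℕ) (label : (Fin d → ZMod N) → ℕ)

lemma reps_subset (S : Finset (Fin d → ZMod N)) : reps d N lN label S ⊆ S :=
  filter_subset _ _

lemma Mdist_eq_sum_ite (r : (Fin d → ZMod N) → ℝ) (S : Finset (Fin d → ZMod N)) :
    Mdist d N lN label r S =
      ∑ x ∈ S, if x ∈ reps d N lN label S then r x + 2 else 3 * (lN : ℝ) :=
  sum_add_mul_card_sdiff_eq_sum_ite (reps_subset d N lN label S) (fun x => r x + 2) (3 * lN)

lemma auxG_mono {S S' : Finset (Fin d → ZMod N)} (h : S ⊆ S') :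
    auxG d N lN S ≤ auxG d N lN S' :=
  fun _ _ hab => ⟨hab.1, h hab.2.1, h hab.2.2.1, hab.2.2.2⟩

lemma mem_reps_of_mem_reps_of_subset {S S' : Finset (Fin d → ZMod N)} (h : S ⊆ S')
    {x : Fin d → ZMod N} (hxS : x ∈ S) (hx : x ∈ reps d N lN label S') :
    x ∈ reps d N lN label S := by
  rw [reps, mem_filter] at hx ⊢
  exact ⟨hxS, fun y hy hxy => hx.2 y (h hy) (hxy.mono (auxG_mono d N lN h))⟩

end

theorem stmt14_general (d N lN : ℕ) (label : (Fin d → ZMod N) → ℕ)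
    (F : Finset (Fin d → ZMod N)) (r : (Fin d → ZMod N) → ℝ)
    (hr : ∀ x ∈ F, 0 ≤ r x) (hrb : ∀ x ∈ F, r x + 2 ≤ 3 * lN)
    (S S' : Finset (Fin d → ZMod N)) (hSS' : S ⊆ S') (hS'F : S' ⊆ F) :
    Mdist d N lN label r S ≤ Mdist d N lN label r S' := by
  rw [Mdist_eq_sum_ite, Mdist_eq_sum_ite]
  calc ∑ x ∈ S, (if x ∈ reps d N lN label S then r x + 2 else 3 * (lN : ℝ))
      ≤ ∑ x ∈ S, (if x ∈ reps d N lN label S' then r x + 2 else 3 * (lN : ℝ)) := by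
        refine sum_le_sum fun x hx => ?_
        by_cases hx' : x ∈ reps d N lN label S'
        · rw [if_pos hx', if_pos (mem_reps_of_mem_reps_of_subset d N lN label hSS' hx hx')]
        · rw [if_neg hx']
          split_ifs
          exacts [hrb x (hS'F (hSS' hx)), le_rfl]
    _ ≤ ∑ x ∈ S', (if x ∈ reps d N lN label S' then r x + 2 else 3 * (lN : ℝ)) := by
        refine sum_le_sum_of_subset_of_nonneg hSS' fun x hx _ => ?_
        have := hr x (hS'F hx)
        split_ifs <;> positivity

/-- monotonicity of the modified total distance: if `r_x + 2 ≤ 3 l_N`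
for all `x ∈ F`, then `Mdist(S) ≤ Mdist(S')` whenever `S ⊆ S' ⊆ F`. -/
theorem stmt14 (d N lN : ℕ) (label : (Fin d → ZMod N) → ℕ)
    (hlabel : Function.Injective label)
    (F : Finset (Fin d → ZMod N)) (r : (Fin d → ZMod N) → ℝ)
    (hr : ∀ x ∈ F, 0 ≤ r x) (hrb : ∀ x ∈ F, r x + 2 ≤ 3 * lN)
    (S S' : Finset (Fin d → ZMod N)) (hSS' : S ⊆ S') (hS'F : S' ⊆ F) :
    Mdist d N lN label r S ≤ Mdist d N lN label r S' :=
  stmt14_general d N lN label F r hr hrb S S' hSS' hS'F
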